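/- Let p be an odd prime and let H and H' be finite groups of the same order n in which every element x satisfies x^p = 1. Then the images of H and H' under regular embeddings into the symmetric group Perm(Fin n) are order equivalent (and hence jump equivalent) subgroups of Perm(Fin n). -/

import Mathlib

/-- A subset `S` of a group is conjugation-stable if `gSg⁻¹ = S` for all `g`. -/
def ConjStable {G : Type*} [Group G] (S : Set G) : Prop :=
  ∀ g : G, (fun x => g * x * g⁻¹) '' S = S

/-- Subgroups `H, H'` of `G` are jump equivalent if for all conjugation-stable
subsets `S, T` of `G`, `⟨H ∩ S⟩ = ⟨H ∩ T⟩ ↔ ⟨H' ∩ S⟩ = ⟨H' ∩ T⟩`. -/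
def JumpEquivalent {G : Type*} [Group G] (H H' : Subgroup G) : Prop :=
  ∀ S T : Set G, ConjStable S → ConjStable T →
    (Subgroup.closure ((H : Set G) ∩ S) = Subgroup.closure ((H : Set G) ∩ T) ↔
     Subgroup.closure ((H' : Set G) ∩ S) = Subgroup.closure ((H' : Set G) ∩ T))

/-- Subgroups `H, H'` of `G` are order equivalent if `#⟨H ∩ S⟩ = #⟨H' ∩ S⟩` for every
conjugation-stable subset `S` of `G`. -/
def OrderEquivalent {G : Type*} [Group G] (H H' : Subgroup G) : Prop :=
  ∀ S : Set G, ConjStable S →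
    Nat.card (Subgroup.closure ((H : Set G) ∩ S)) =
      Nat.card (Subgroup.closure ((H' : Set G) ∩ S))

/-- Subgroups `H, H'` of `G` are Gassmann-Sunada equivalent if `#(H ∩ S) = #(H' ∩ S)` for
every conjugation-stable subset `S` of `G`. -/
def GassmannEquivalent {G : Type*} [Group G] (H H' : Subgroup G) : Prop :=
  ∀ S : Set G, ConjStable S →
    Set.ncard ((H : Set G) ∩ S) = Set.ncard ((H' : Set G) ∩ S)

/-- Subgroups `H, H'` of `G` are Kronecker equivalent if for every conjugation-stable subset
`S` of `G`, `H ∩ S = ∅ ↔ H' ∩ S = ∅`. -/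
def KroneckerEquivalent {G : Type*} [Group G] (H H' : Subgroup G) : Prop :=
  ∀ S : Set G, ConjStable S → ((H : Set G) ∩ S = ∅ ↔ (H' : Set G) ∩ S = ∅)

/-- The regular embedding of a group `K` with a bijection `e : K ≃ Fin n` into the symmetric
group `Perm (Fin n)`: the action of `K` on itself by left multiplication, transported along
`e`. -/
def regularEmbedding {K : Type*} [Group K] {n : ℕ} (e : K ≃ Fin n) :
    K →* Equiv.Perm (Fin n) where
  toFun k := (e.symm.trans (Equiv.mulLeft k)).trans e
  map_one' := by
    ext x
    simp
  map_mul' k k' := by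
    ext x
    simp [mul_assoc]

/-!
In the regular representation every nontrivial element acts without fixed points, so an element
of prime order `p` is a product of `n / p` disjoint `p`-cycles. When both groups have exponent
`p`, all nontrivial elements of both images therefore lie in one conjugacy class of
`Perm (Fin n)`. A conjugation-stable `S` then meets each image either in `{1}` at most or in all
of its nontrivial elements, so `⟨H ∩ S⟩` is `⊥` or the whole image, and which case occurs
depends on `S` alone.
-/

open Equiv

section ConjClass

variable {G : Type*} [Group G]

theorem ConjStable.mem_of_isConj {S : Set G} (hS : ConjStable S) {a b : G} (hab : IsConj a b)
    (ha : a ∈ S) : b ∈ S := by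
  obtain ⟨c, hc⟩ := isConj_iff.1 hab
  rw [← hS c]
  exact ⟨a, ha, hc⟩

open scoped Classical in
theorem closure_inter_eq_ite_of_forall_isConj {K : Subgroup G} {C S : Set G}
    (hC : ∀ a ∈ C, ∀ b ∈ C, IsConj a b) (hK : ∀ k ∈ K, k ≠ 1 → k ∈ C)
    (hS : ConjStable S) :
    Subgroup.closure ((K : Set G) ∩ S) = if (C ∩ S).Nonempty then K else ⊥ := by
  split_ifs with hCS
  · obtain ⟨c, hcC, hcS⟩ := hCS
    refine le_antisymm ((Subgroup.closure_le _).2 Set.inter_subset_left) fun k hk => ?_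
    by_cases hk1 : k = 1
    · exact hk1 ▸ Subgroup.one_mem _
    · exact Subgroup.subset_closure ⟨hk, hS.mem_of_isConj (hC c hcC k (hK k hk hk1)) hcS⟩
  · refine eq_bot_iff.2 <| (Subgroup.closure_le _).2 fun k ⟨hk, hkS⟩ => ?_
    by_contra hk1
    exact hCS ⟨k, hK k hk hk1, hkS⟩

theorem orderEquivalent_and_jumpEquivalent_of_forall_isConj {H H' : Subgroup G} {C : Set G}
    (hcard : Nat.card H = Nat.card H') (hC : ∀ a ∈ C, ∀ b ∈ C, IsConj a b)
    (hH : ∀ k ∈ H, k ≠ 1 → k ∈ C) (hH' : ∀ k ∈ H', k ≠ 1 → k ∈ C) :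
    OrderEquivalent H H' ∧ JumpEquivalent H H' := by
  have hbot : H = ⊥ ↔ H' = ⊥ := by
    rw [Subgroup.eq_bot_iff_card, Subgroup.eq_bot_iff_card, hcard]
  refine ⟨fun S hS => ?_, fun S T hS hT => ?_⟩
  · rw [closure_inter_eq_ite_of_forall_isConj hC hH hS,
      closure_inter_eq_ite_of_forall_isConj hC hH' hS]
    split_ifs
    exacts [hcard, rfl]
  · simp only [closure_inter_eq_ite_of_forall_isConj hC hH hS,
      closure_inter_eq_ite_of_forall_isConj hC hH hT,
      closure_inter_eq_ite_of_forall_isConj hC hH' hS,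
      closure_inter_eq_ite_of_forall_isConj hC hH' hT]
    split_ifs <;> simp [hbot, eq_comm]

end ConjClass

section RegularEmbedding

variable {K : Type*} [Group K] {n : ℕ}

theorem regularEmbedding_apply (e : K ≃ Fin n) (k : K) (x : Fin n) :
    regularEmbedding e k x = e (k * e.symm x) :=
  rfl

theorem regularEmbedding_injective (e : K ≃ Fin n) : Function.Injective (regularEmbedding e) :=
  fun k k' h => by simpa [regularEmbedding_apply] using DFunLike.congr_fun h (e 1)

theorem card_range_regularEmbedding (e : K ≃ Fin n) :
    Nat.card (regularEmbedding e).range = n := by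
  rw [← Nat.card_congr (MonoidHom.ofInjective (regularEmbedding_injective e)).toEquiv,
    Nat.card_eq_of_equiv_fin e]

theorem support_regularEmbedding (e : K ≃ Fin n) {k : K} (hk : k ≠ 1) :
    (regularEmbedding e k).support = Finset.univ := by
  refine Finset.eq_univ_of_forall fun x => Perm.mem_support.2 fun hx => hk ?_
  simpa [regularEmbedding_apply] using congrArg e.symm hx

theorem cycleType_regularEmbedding_of_orderOf_eq_prime {p : ℕ} (hp : p.Prime) (e : K ≃ Fin n)
    {k : K} (hk : orderOf k = p) :
    (regularEmbedding e k).cycleType = Multiset.replicate (n / p) p := by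
  have hσ : orderOf (regularEmbedding e k) = p := by
    rw [orderOf_injective _ (regularEmbedding_injective e), hk]
  have hk1 : k ≠ 1 := by
    rintro rfl
    exact hp.one_lt.ne (by simpa using hk)
  obtain ⟨m, hm⟩ := Perm.cycleType_prime_order (hσ ▸ hp)
  have hsum : n = (m + 1) * p := by
    simpa [hm, hσ, support_regularEmbedding e hk1, add_mul, add_comm]
      using (Perm.sum_cycleType (regularEmbedding e k)).symm
  rw [hm, hσ, hsum, Nat.mul_div_cancel _ hp.pos]

theorem cycleType_of_mem_range_regularEmbedding {p : ℕ} (hp : p.Prime) (e : K ≃ Fin n)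
    (hK : ∀ x : K, x ^ p = 1) :
    ∀ σ ∈ (regularEmbedding e).range, σ ≠ 1 →
      σ.cycleType = Multiset.replicate (n / p) p := by
  have : Fact p.Prime := ⟨hp⟩
  rintro _ ⟨k, rfl⟩ hσ
  have hk1 : k ≠ 1 := by
    rintro rfl
    exact hσ (map_one _)
  exact cycleType_regularEmbedding_of_orderOf_eq_prime hp e (orderOf_eq_prime (hK k) hk1)

end RegularEmbedding

theorem orderEquivalent_range_regularEmbedding_of_exponent_p_general {p n : ℕ}
    (hp : Nat.Prime p)
    {H H' : Type*} [Group H] [Group H'] (e : H ≃ Fin n) (e' : H' ≃ Fin n)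
    (hH : ∀ x : H, x ^ p = 1) (hH' : ∀ x : H', x ^ p = 1) :
    OrderEquivalent (regularEmbedding e).range (regularEmbedding e').range ∧
      JumpEquivalent (regularEmbedding e).range (regularEmbedding e').range :=
  orderEquivalent_and_jumpEquivalent_of_forall_isConj
    (C := {σ | σ.cycleType = .replicate (n / p) p})
    (by rw [card_range_regularEmbedding, card_range_regularEmbedding])
    (fun _ ha _ hb => Perm.isConj_iff_cycleType_eq.2 (ha.trans hb.symm))
    (cycleType_of_mem_range_regularEmbedding hp e hH)
    (cycleType_of_mem_range_regularEmbedding hp e' hH')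

/-- if `p` is an odd prime and `H`, `H'` are finite groups of the same order `n`
with `x ^ p = 1` for every element `x`, then the images of `H` and `H'` under regular
embeddings into `Perm (Fin n)` are order equivalent, and hence jump equivalent. -/
theorem orderEquivalent_range_regularEmbedding_of_exponent_p {p n : ℕ}
    (hp : Nat.Prime p) (hodd : Odd p)
    {H H' : Type*} [Group H] [Group H'] (e : H ≃ Fin n) (e' : H' ≃ Fin n)
    (hH : ∀ x : H, x ^ p = 1) (hH' : ∀ x : H', x ^ p = 1) :
    OrderEquivalent (regularEmbedding e).range (regularEmbedding e').range ∧
      JumpEquivalent (regularEmbedding e).range (regularEmbedding e').range :=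
  orderEquivalent_range_regularEmbedding_of_exponent_p_general hp e e' hH hH'
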